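/- For every positive integer c₀ and every t > 3(c₀ + 1) with t ≥ 4 and k₁,…,k_t ≥ 1, the graph G = G(t; k₁,…,k_t) satisfies γ₂(G) − a(G) = ⌈t/3⌉ > c₀ + 1. In particular, the difference between the 2-domination number and the annihilation number of a connected graph can be arbitrarily large, disproving the conjecture γ₂(G) ≤ a(G) + 1. -/

import Mathlib

/-!
Pendant vertices have degree one, so they lie in every 2-dominating set; a cycle vertex outside
the set then still needs a neighbour in the set on its own cycle, so the set restricted to each
cycle `C_{3k+1}` dominates that cycle and, closed cycle-neighbourhoods having three vertices, has
at least `k + 1` elements. The pendants together with every third cycle vertex (starting at the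
one joined to `w`) 2-dominate, whence `γ₂ = 4∑kᵢ + t`.

The degrees are `1` on the `3∑kᵢ` pendants, `3` on the `3∑kᵢ + t` cycle vertices and `t` at `w`,
so `m = 6∑kᵢ + 2t`. Charging every pendant an extra `2` makes every weight at least `3`, which
bounds an annihilation set by `3|S| ≤ m + 6∑kᵢ`; the pendants with `∑kᵢ + ⌊2t/3⌋` cycle vertices
attain `a = 4∑kᵢ + ⌊2t/3⌋`. The difference is `t - ⌊2t/3⌋ = ⌈t/3⌉`.
-/

open Classical Finset
noncomputable section

/-- `S` is a 2-dominating set of `G`: every vertex outside `S` has ≥ 2 neighbors in `S`. -/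
def IsTwoDomSet {V : Type*} [Fintype V] (G : SimpleGraph V) (S : Finset V) : Prop :=
  ∀ v, v ∉ S → 2 ≤ (G.neighborFinset v ∩ S).card

/-- The 2-domination number. -/
noncomputable def gamma2 {V : Type*} [Fintype V] (G : SimpleGraph V) : ℕ :=
  sInf {k | ∃ S : Finset V, IsTwoDomSet G S ∧ S.card = k}

/-- `S` is an annihilation set of `G`: the sum of degrees over `S` is at most `m(G)`. -/
def IsAnnSet {V : Type*} [Fintype V] (G : SimpleGraph V) (S : Finset V) : Prop :=
  ∑ v ∈ S, G.degree v ≤ G.edgeFinset.card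

/-- The annihilation number: the largest size of an annihilation set (equivalently, the
largest `k` such that the sum of the `k` smallest degrees is at most the edge count). -/
noncomputable def annihilation {V : Type*} [Fintype V] (G : SimpleGraph V) : ℕ :=
  sSup {k | ∃ S : Finset V, IsAnnSet G S ∧ S.card = k}

/-- Vertices of `G(t; k₁,…,k_t)`: `none` is the hub `w`; `some (Sum.inl ⟨i, j⟩)` is the
`j`-th vertex of the `i`-th cycle `C_{3kᵢ+1}` (vertex `0` is joined to `w`);
`some (Sum.inr ⟨i, p⟩)` is the pendant vertex attached to cycle vertex `p + 1`. -/
abbrev GVert (t : ℕ) (k : Fin t → ℕ) : Type :=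
  Option ((Σ i : Fin t, Fin (3 * k i + 1)) ⊕ (Σ i : Fin t, Fin (3 * k i)))

/-- The counterexample graph `G(t; k₁,…,k_t)`. -/
def GG (t : ℕ) (k : Fin t → ℕ) : SimpleGraph (GVert t k) :=
  SimpleGraph.fromRel (fun a b =>
    match a, b with
    | none, some (Sum.inl ⟨_, j⟩) => (j : ℕ) = 0
    | some (Sum.inl ⟨i, a⟩), some (Sum.inl ⟨i', b⟩) =>
        i = i' ∧ ((b : ℕ) = (a : ℕ) + 1 ∨ ((a : ℕ) = 3 * k i ∧ (b : ℕ) = 0))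
    | some (Sum.inl ⟨i, a⟩), some (Sum.inr ⟨i', p⟩) => i = i' ∧ (a : ℕ) = (p : ℕ) + 1
    | _, _ => False)

lemma Fin.eq_add_one_iff_val {n : ℕ} {a b : Fin (n + 1)} :
    b = a + 1 ↔ (b : ℕ) = a + 1 ∨ ((a : ℕ) = n ∧ (b : ℕ) = 0) := by
  rw [Fin.ext_iff, Fin.val_add_one]
  split_ifs with h
  · rw [Fin.ext_iff, Fin.val_last] at h; omega
  · rw [Fin.ext_iff, Fin.val_last] at h; omega

lemma Fin.add_one_ne_sub_one {n : ℕ} (hn : 3 ≤ n) (a : Fin (n + 1)) : a + 1 ≠ a - 1 := by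
  have h1 := Fin.val_add_one a
  have h2 := Fin.val_add_one (a + 1)
  simp only [Fin.ext_iff, Fin.val_last] at h1 h2
  rw [Ne, eq_sub_iff_add_eq, Fin.ext_iff]
  split_ifs at h1 h2 <;> omega

lemma Fin.exists_add_one_or_sub_one_mod_three {m : ℕ} (a : Fin (3 * m + 1))
    (ha : (a : ℕ) % 3 ≠ 0) : ∃ c, (c = a + 1 ∨ c = a - 1) ∧ (c : ℕ) % 3 = 0 := by
  have h1 := Fin.val_add_one a
  have h2 := Fin.coe_sub_one a
  simp only [Fin.ext_iff, Fin.val_last, Fin.val_zero] at h1 h2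
  rcases (by omega : (a : ℕ) % 3 = 1 ∨ (a : ℕ) % 3 = 2) with h | h
  · exact ⟨a - 1, Or.inr rfl, by split_ifs at h2 <;> omega⟩
  · exact ⟨a + 1, Or.inl rfl, by split_ifs at h1 <;> omega⟩

lemma Fin.le_three_mul_card_of_cyclic_cover {n : ℕ} [NeZero n] (T : Finset (Fin n))
    (hT : ∀ a, a ∈ T ∨ a + 1 ∈ T ∨ a - 1 ∈ T) : n ≤ 3 * T.card := by
  have hcover : (univ : Finset (Fin n)) ⊆ T.biUnion (fun m => {m - 1, m, m + 1}) := by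
    intro a _
    simp only [mem_biUnion, mem_insert, mem_singleton]
    rcases hT a with h | h | h
    · exact ⟨a, h, Or.inr (Or.inl rfl)⟩
    · exact ⟨a + 1, h, Or.inl (add_sub_cancel_right a 1).symm⟩
    · exact ⟨a - 1, h, Or.inr (Or.inr (sub_add_cancel a 1).symm)⟩
  calc n = (univ : Finset (Fin n)).card := (card_fin n).symm
    _ ≤ T.card * 3 := (card_le_card hcover).trans
        (card_biUnion_le_card_mul _ _ _ fun _ _ => card_le_three)
    _ = 3 * T.card := mul_comm _ _

section

variable {V : Type*} [Fintype V] {G : SimpleGraph V} {S : Finset V} {v : V} {n : ℕ}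

lemma IsTwoDomSet.mem_of_degree_le_one (hS : IsTwoDomSet G S) (hv : G.degree v ≤ 1) : v ∈ S := by
  by_contra hvS
  have := (hS v hvS).trans (card_le_card inter_subset_left)
  rw [SimpleGraph.card_neighborFinset_eq_degree] at this
  omega

lemma IsTwoDomSet.exists_adj_mem_ne (hS : IsTwoDomSet G S) (hv : v ∉ S) (u : V) :
    ∃ x ∈ S, G.Adj v x ∧ x ≠ u := by
  obtain ⟨x, hx, y, hy, hxy⟩ := one_lt_card.mp (hS v hv)
  rw [mem_inter, SimpleGraph.mem_neighborFinset] at hx hy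
  by_cases hxu : x = u
  · exact ⟨y, hy.2, hy.1, fun hyu => hxy (hxu.trans hyu.symm)⟩
  · exact ⟨x, hx.2, hx.1, hxu⟩

lemma isTwoDomSet_of_forall_exists
    (h : ∀ v ∉ S, ∃ x ∈ S, ∃ y ∈ S, x ≠ y ∧ G.Adj v x ∧ G.Adj v y) : IsTwoDomSet G S := by
  intro v hv
  obtain ⟨x, hxS, y, hyS, hxy, hx, hy⟩ := h v hv
  exact one_lt_card.mpr ⟨x, by simp [hx, hxS], y, by simp [hy, hyS], hxy⟩

lemma gamma2_le_card (hS : IsTwoDomSet G S) : gamma2 G ≤ S.card :=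
  Nat.sInf_le ⟨S, hS, rfl⟩

lemma le_gamma2 (h : ∀ S, IsTwoDomSet G S → n ≤ S.card) : n ≤ gamma2 G :=
  le_csInf ⟨_, univ, fun v hv => absurd (mem_univ v) hv, rfl⟩
    (by rintro _ ⟨S, hS, rfl⟩; exact h S hS)

lemma card_le_annihilation (hS : IsAnnSet G S) : S.card ≤ annihilation G :=
  le_csSup ⟨Fintype.card V, by rintro _ ⟨S, -, rfl⟩; exact card_le_univ S⟩ ⟨S, hS, rfl⟩

lemma annihilation_le (h : ∀ S, IsAnnSet G S → S.card ≤ n) : annihilation G ≤ n :=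
  csSup_le ⟨0, ∅, by simp [IsAnnSet], rfl⟩ (by rintro _ ⟨S, hS, rfl⟩; exact h S hS)

lemma IsAnnSet.mul_card_le (hS : IsAnnSet G S) (P : Finset V) (d : ℕ)
    (hd : ∀ v ∉ P, d ≤ G.degree v) (hP : ∀ v ∈ P, 1 ≤ G.degree v) :
    d * S.card ≤ G.edgeFinset.card + (d - 1) * P.card := by
  have hv : ∀ v ∈ S, d ≤ G.degree v + (d - 1) * (if v ∈ P then 1 else 0) := by
    intro v _
    by_cases hvP : v ∈ P
    · have := hP v hvP; simp only [hvP, if_true]; omega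
    · simpa [hvP] using hd v hvP
  calc d * S.card = ∑ _v ∈ S, d := by rw [sum_const, smul_eq_mul, mul_comm]
    _ ≤ ∑ v ∈ S, (G.degree v + (d - 1) * (if v ∈ P then 1 else 0)) := sum_le_sum hv
    _ = ∑ v ∈ S, G.degree v + (d - 1) * (S ∩ P).card := by
      rw [sum_add_distrib, ← mul_sum, sum_boole, filter_mem_eq_inter, Nat.cast_id]
    _ ≤ G.edgeFinset.card + (d - 1) * P.card := by
      gcongr
      · exact hS
      · exact inter_subset_right

end

namespace GG

variable {t : ℕ} {k : Fin t → ℕ}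

def cyc (i : Fin t) (a : Fin (3 * k i + 1)) : GVert t k := some (Sum.inl ⟨i, a⟩)

def pen (i : Fin t) (p : Fin (3 * k i)) : GVert t k := some (Sum.inr ⟨i, p⟩)

def outer (i : Fin t) (a : Fin (3 * k i + 1)) : GVert t k :=
  if h : a = 0 then none else pen i (a.pred h)

lemma cyc_inj {i : Fin t} {a b : Fin (3 * k i + 1)} : cyc i a = cyc i b ↔ a = b := by
  simp [cyc]

lemma adj_cyc_cyc {i : Fin t} (hk : 1 ≤ k i) (a b : Fin (3 * k i + 1)) :
    (GG t k).Adj (cyc i a) (cyc i b) ↔ b = a + 1 ∨ a = b + 1 := by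
  rw [Fin.eq_add_one_iff_val, Fin.eq_add_one_iff_val]
  simp only [GG, SimpleGraph.fromRel_adj, cyc, ne_eq, Option.some.injEq, Sum.inl.injEq,
    Sigma.mk.injEq, heq_eq_eq, true_and, Fin.ext_iff]
  omega

lemma outer_eq_pen {i : Fin t} (a : Fin (3 * k i + 1)) (p : Fin (3 * k i)) :
    outer i a = pen i p ↔ (a : ℕ) = p + 1 := by
  by_cases ha : a = 0
  · simp [outer, ha, pen]
  · have ha' : (a : ℕ) ≠ 0 := Fin.val_ne_zero_iff.mpr ha
    simp only [outer, ha, dite_false, pen, Option.some.injEq, Sum.inr.injEq, Sigma.mk.injEq,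
      heq_eq_eq, true_and, Fin.ext_iff, Fin.val_pred]
    omega

lemma adj_cyc_iff {i : Fin t} (hk : 1 ≤ k i) (a : Fin (3 * k i + 1)) (u : GVert t k) :
    (GG t k).Adj (cyc i a) u ↔ u = cyc i (a + 1) ∨ u = cyc i (a - 1) ∨ u = outer i a := by
  rcases u with _ | ⟨i', b⟩ | ⟨i', p⟩
  · by_cases ha : a = 0 <;> simp [GG, cyc, outer, pen, ha]
  · by_cases hi : i' = i
    · subst hi
      change (GG t k).Adj (cyc i' a) (cyc i' b) ↔ cyc i' b = _ ∨ cyc i' b = _ ∨ cyc i' b = _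
      rw [adj_cyc_cyc hk, cyc_inj, cyc_inj, eq_sub_iff_add_eq, eq_comm (a := b + 1)]
      by_cases ha : a = 0 <;> simp [outer, cyc, pen, ha]
    · by_cases ha : a = 0 <;> simp [GG, outer, cyc, pen, ha, hi, Ne.symm hi]
  · by_cases hi : i' = i
    · subst hi
      change (GG t k).Adj (cyc i' a) (pen i' p) ↔ pen i' p = _ ∨ pen i' p = _ ∨ pen i' p = _
      rw [eq_comm (b := outer i' a), outer_eq_pen]
      simp [GG, cyc, pen]
    · by_cases ha : a = 0 <;> simp [GG, outer, cyc, pen, ha, hi, Ne.symm hi]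

lemma adj_pen_iff (i : Fin t) (p : Fin (3 * k i)) (u : GVert t k) :
    (GG t k).Adj (pen i p) u ↔ u = cyc i p.succ := by
  rcases u with _ | ⟨i', b⟩ | ⟨i', q⟩
  · simp [GG, pen, cyc]
  · by_cases hi : i' = i
    · subst hi
      simp [GG, pen, cyc, Fin.ext_iff (b := p.succ)]
    · simp [GG, pen, cyc, hi]
  · simp [GG, pen, cyc]

lemma adj_hub_iff (u : GVert t k) : (GG t k).Adj none u ↔ ∃ i, u = cyc i 0 := by
  rcases u with _ | ⟨i, b⟩ | ⟨i, q⟩ <;> simp [GG, cyc]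

lemma outer_ne_cyc {i i' : Fin t} (a : Fin (3 * k i + 1)) (b : Fin (3 * k i' + 1)) :
    outer i a ≠ cyc i' b := by
  unfold outer; split <;> simp [cyc, pen]

lemma degree_pen (i : Fin t) (p : Fin (3 * k i)) : (GG t k).degree (pen i p) = 1 := by
  rw [← SimpleGraph.card_neighborFinset_eq_degree, card_eq_one]
  exact ⟨cyc i p.succ, by ext u; simp [adj_pen_iff]⟩

lemma degree_cyc {i : Fin t} (hk : 1 ≤ k i) (a : Fin (3 * k i + 1)) :
    (GG t k).degree (cyc i a) = 3 := by
  have hnbr : (GG t k).neighborFinset (cyc i a) = {cyc i (a + 1), cyc i (a - 1), outer i a} := by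
    ext u; simp [adj_cyc_iff hk]
  rw [← SimpleGraph.card_neighborFinset_eq_degree, hnbr, card_eq_three]
  exact ⟨_, _, _, fun h => Fin.add_one_ne_sub_one (by omega) a (cyc_inj.mp h),
    (outer_ne_cyc _ _).symm, (outer_ne_cyc _ _).symm, rfl⟩

lemma degree_hub : (GG t k).degree none = t := by
  have hnbr : (GG t k).neighborFinset none = univ.image (fun i => cyc i 0) := by
    ext u; simp [adj_hub_iff, eq_comm]
  have hinj : Function.Injective fun i => (cyc i 0 : GVert t k) :=
    fun i j h => congrArg Sigma.fst (Sum.inl_injective (Option.some_injective _ h))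
  rw [← SimpleGraph.card_neighborFinset_eq_degree, hnbr, card_image_of_injective _ hinj,
    card_univ, Fintype.card_fin]

lemma card_edgeFinset (hk : ∀ i, 1 ≤ k i) :
    (GG t k).edgeFinset.card = 6 * ∑ i, k i + 2 * t := by
  have hsum : ∑ v, (GG t k).degree v = 12 * ∑ i, k i + 4 * t := by
    simp only [Fintype.sum_option, Fintype.sum_sum_type, Fintype.sum_sigma]
    change (GG t k).degree none + (∑ i, ∑ a, (GG t k).degree (cyc i a)
      + ∑ i, ∑ p, (GG t k).degree (pen i p)) = _
    simp only [degree_hub, degree_cyc (hk _), degree_pen, sum_const, card_univ,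
      Fintype.card_fin, smul_eq_mul, add_mul, one_mul, mul_one, sum_add_distrib]
    simp only [← sum_mul, ← mul_sum]
    ring
  have := (GG t k).sum_degrees_eq_twice_card_edges
  omega

variable (t k) in
def pendants : Finset (GVert t k) := univ.image fun x : Σ i, Fin (3 * k i) => pen x.1 x.2

variable (t k) in
def cycleVerts : Finset (GVert t k) := univ.image fun x : Σ i, Fin (3 * k i + 1) => cyc x.1 x.2

lemma pen_injective : Function.Injective fun x : Σ i, Fin (3 * k i) => (pen x.1 x.2 : GVert t k) :=
  fun _ _ h => Sum.inr_injective (Option.some_injective _ h)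

lemma cyc_injective :
    Function.Injective fun x : Σ i, Fin (3 * k i + 1) => (cyc x.1 x.2 : GVert t k) :=
  fun _ _ h => Sum.inl_injective (Option.some_injective _ h)

lemma card_pendants : (pendants t k).card = 3 * ∑ i, k i := by
  rw [pendants, card_image_of_injective _ pen_injective,
    card_univ, Fintype.card_sigma, mul_sum]
  simp

lemma card_cycleVerts : (cycleVerts t k).card = 3 * ∑ i, k i + t := by
  rw [cycleVerts, card_image_of_injective _ cyc_injective,
    card_univ, Fintype.card_sigma, mul_sum]
  simp [sum_add_distrib]

lemma disjoint_pendants_cycleVerts : Disjoint (pendants t k) (cycleVerts t k) := by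
  simp only [disjoint_left, pendants, cycleVerts, mem_image, mem_univ, true_and]
  rintro _ ⟨x, rfl⟩ ⟨y, hy⟩
  simp [cyc, pen] at hy

variable {S : Finset (GVert t k)}

lemma pendants_subset (hS : IsTwoDomSet (GG t k) S) : pendants t k ⊆ S := by
  simp only [pendants, image_subset_iff, mem_univ, forall_const]
  exact fun x => hS.mem_of_degree_le_one (degree_pen x.1 x.2).le

lemma cyc_mem_or_add_one_mem_or_sub_one_mem (hk : ∀ i, 1 ≤ k i) (hS : IsTwoDomSet (GG t k) S)
    (i : Fin t) (a : Fin (3 * k i + 1)) : cyc i a ∈ S ∨ cyc i (a + 1) ∈ S ∨ cyc i (a - 1) ∈ S := by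
  by_cases ha : cyc i a ∈ S
  · exact Or.inl ha
  obtain ⟨x, hxS, hax, hx⟩ := hS.exists_adj_mem_ne ha (outer i a)
  rcases (adj_cyc_iff (hk i) a x).mp hax with rfl | rfl | rfl
  exacts [Or.inr (Or.inl hxS), Or.inr (Or.inr hxS), absurd rfl hx]

lemma le_card_of_isTwoDomSet (hk : ∀ i, 1 ≤ k i) (hS : IsTwoDomSet (GG t k) S) :
    4 * ∑ i, k i + t ≤ S.card := by
  set T : ∀ i, Finset (Fin (3 * k i + 1)) := fun i => univ.filter fun a => cyc i a ∈ S
  have hT : ∀ i, k i + 1 ≤ (T i).card := fun i => by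
    have := Fin.le_three_mul_card_of_cyclic_cover (T i)
      (by simpa [T] using cyc_mem_or_add_one_mem_or_sub_one_mem hk hS i)
    omega
  set C := (univ.sigma T).image fun x => (cyc x.1 x.2 : GVert t k)
  have hC : C ⊆ S := by
    simp only [C, T, image_subset_iff, mem_sigma, mem_univ, mem_filter, true_and]
    exact fun _ h => h
  have hdisj : Disjoint (pendants t k) C :=
    disjoint_pendants_cycleVerts.mono_right (image_subset_image (subset_univ _))
  calc 4 * ∑ i, k i + t = 3 * ∑ i, k i + ∑ i, (k i + 1) := by
        rw [sum_add_distrib, sum_const, card_univ, Fintype.card_fin, smul_eq_mul]; ring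
    _ ≤ (pendants t k).card + C.card := by
        rw [card_pendants, card_image_of_injective _ cyc_injective, card_sigma]
        gcongr with i
        exact hT i
    _ = (pendants t k ∪ C).card := (card_union_of_disjoint hdisj).symm
    _ ≤ S.card := card_le_card (union_subset (pendants_subset hS) hC)

variable (t k) in
def twoDomSet : Finset (GVert t k) :=
  pendants t k ∪ univ.image fun x : Σ i, Fin (k i + 1) => cyc x.1 ⟨3 * x.2, by omega⟩

lemma card_twoDomSet : (twoDomSet t k).card = 4 * ∑ i, k i + t := by
  have hinj : Function.Injective fun x : Σ i, Fin (k i + 1) =>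
      (cyc x.1 ⟨3 * x.2, by omega⟩ : GVert t k) := by
    rintro ⟨i, a⟩ ⟨j, b⟩ h
    obtain ⟨rfl, h⟩ := Sigma.mk.inj_iff.mp (cyc_injective h)
    simp only [heq_eq_eq, Fin.mk.injEq] at h
    simp only [Sigma.mk.inj_iff, heq_eq_eq, true_and]
    omega
  have hsub : (univ.image fun x : Σ i, Fin (k i + 1) =>
      (cyc x.1 ⟨3 * x.2, by omega⟩ : GVert t k)) ⊆ cycleVerts t k := by
    simp only [cycleVerts, image_subset_iff, mem_image, mem_univ, true_and, forall_const]
    exact fun x => ⟨⟨x.1, _⟩, rfl⟩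
  have hdisj := (disjoint_pendants_cycleVerts (t := t) (k := k)).mono_right hsub
  rw [twoDomSet, card_union_of_disjoint hdisj, card_pendants, card_image_of_injective _ hinj,
    card_univ, Fintype.card_sigma]
  simp only [Fintype.card_fin, sum_add_distrib, sum_const, card_univ, smul_eq_mul, mul_one]
  ring

lemma pen_mem_twoDomSet (i : Fin t) (p : Fin (3 * k i)) : pen i p ∈ twoDomSet t k :=
  mem_union_left _ (mem_image_of_mem _ (mem_univ (⟨i, p⟩ : Σ i, Fin (3 * k i))))

lemma cyc_mem_twoDomSet {i : Fin t} {a : Fin (3 * k i + 1)} (ha : (a : ℕ) % 3 = 0) :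
    cyc i a ∈ twoDomSet t k := by
  refine mem_union_right _ (mem_image.mpr ⟨⟨i, ⟨a / 3, by omega⟩⟩, mem_univ _, ?_⟩)
  simp only [cyc_inj, Fin.ext_iff]
  omega

lemma isTwoDomSet_twoDomSet (hk : ∀ i, 1 ≤ k i) (ht : 2 ≤ t) :
    IsTwoDomSet (GG t k) (twoDomSet t k) := by
  refine isTwoDomSet_of_forall_exists fun v hv => ?_
  rcases v with _ | ⟨i, a⟩ | ⟨i, p⟩
  · refine ⟨cyc ⟨0, by omega⟩ 0, cyc_mem_twoDomSet rfl, cyc ⟨1, by omega⟩ 0,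
      cyc_mem_twoDomSet rfl, by simp [cyc], (adj_hub_iff _).mpr ⟨_, rfl⟩,
      (adj_hub_iff _).mpr ⟨_, rfl⟩⟩
  · have ha : (a : ℕ) % 3 ≠ 0 := fun h => hv (cyc_mem_twoDomSet h)
    have ha0 : a ≠ 0 := by rintro rfl; exact ha rfl
    obtain ⟨c, hc, hc3⟩ := Fin.exists_add_one_or_sub_one_mod_three a ha
    refine ⟨cyc i c, cyc_mem_twoDomSet hc3, outer i a, ?_, (outer_ne_cyc _ _).symm,
      (adj_cyc_iff (hk i) a _).mpr ?_, (adj_cyc_iff (hk i) a _).mpr (Or.inr (Or.inr rfl))⟩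
    · rw [outer, dif_neg ha0]; exact pen_mem_twoDomSet _ _
    · rcases hc with rfl | rfl <;> simp
  · exact absurd (pen_mem_twoDomSet i p) hv

lemma gamma2_eq (hk : ∀ i, 1 ≤ k i) (ht : 2 ≤ t) : gamma2 (GG t k) = 4 * ∑ i, k i + t :=
  le_antisymm ((gamma2_le_card (isTwoDomSet_twoDomSet hk ht)).trans_eq card_twoDomSet)
    (le_gamma2 fun _ hS => le_card_of_isTwoDomSet hk hS)

lemma card_le_of_isAnnSet (hk : ∀ i, 1 ≤ k i) (ht : 3 ≤ t) (hS : IsAnnSet (GG t k) S) :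
    S.card ≤ 4 * ∑ i, k i + 2 * t / 3 := by
  have hdeg : ∀ v ∉ pendants t k, 3 ≤ (GG t k).degree v := by
    rintro (_ | ⟨i, a⟩ | ⟨i, p⟩) hv
    · exact degree_hub.symm ▸ ht
    · exact (degree_cyc (hk i) a).ge
    · exact absurd (mem_image_of_mem _ (mem_univ (⟨i, p⟩ : Σ i, Fin (3 * k i)))) hv
  have hpen : ∀ v ∈ pendants t k, 1 ≤ (GG t k).degree v := fun v hv => by
    obtain ⟨x, -, rfl⟩ := mem_image.mp hv
    exact (degree_pen _ _).ge
  have key := hS.mul_card_le (pendants t k) 3 hdeg hpen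
  rw [card_edgeFinset hk, card_pendants] at key
  omega

lemma exists_isAnnSet_card_eq (hk : ∀ i, 1 ≤ k i) :
    ∃ S, IsAnnSet (GG t k) S ∧ S.card = 4 * ∑ i, k i + 2 * t / 3 := by
  obtain ⟨C, hC, hCcard⟩ := exists_subset_card_eq (s := cycleVerts t k)
    (n := ∑ i, k i + 2 * t / 3) (by rw [card_cycleVerts]; omega)
  have hdisj := disjoint_pendants_cycleVerts.mono_right hC
  refine ⟨pendants t k ∪ C, ?_, by rw [card_union_of_disjoint hdisj, card_pendants, hCcard]; ring⟩
  have hpen : ∀ v ∈ pendants t k, (GG t k).degree v = 1 := by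
    simp only [pendants, mem_image, mem_univ, true_and]
    rintro _ ⟨x, rfl⟩
    exact degree_pen _ _
  have hcyc : ∀ v ∈ C, (GG t k).degree v = 3 := fun v hv => by
    obtain ⟨x, -, rfl⟩ := mem_image.mp (hC hv)
    exact degree_cyc (hk _) _
  rw [IsAnnSet, sum_union hdisj, sum_const_nat hpen, sum_const_nat hcyc, card_edgeFinset hk,
    card_pendants, hCcard]
  omega

lemma annihilation_eq (hk : ∀ i, 1 ≤ k i) (ht : 3 ≤ t) :
    annihilation (GG t k) = 4 * ∑ i, k i + 2 * t / 3 := by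
  obtain ⟨S, hS, hcard⟩ := exists_isAnnSet_card_eq hk
  exact le_antisymm (annihilation_le fun _ => card_le_of_isAnnSet hk ht)
    (hcard ▸ card_le_annihilation hS)

end GG

theorem stmt12_general (c₀ : ℕ) (t : ℕ) (ht : 3 * (c₀ + 1) < t)
    (k : Fin t → ℕ) (hk : ∀ i, 1 ≤ k i) :
    gamma2 (GG t k) - annihilation (GG t k) = (t + 2) / 3 ∧
    c₀ + 1 < gamma2 (GG t k) - annihilation (GG t k) := by
  rw [GG.gamma2_eq hk (by omega), GG.annihilation_eq hk (by omega)]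
  omega

/-- Theorem 2.1: `γ₂(G(t;k)) − a(G(t;k)) = ⌈t/3⌉ > c₀ + 1` whenever `t > 3(c₀+1)`;
so the 2-domination number can exceed the annihilation number by arbitrarily much,
disproving the conjecture `γ₂(G) ≤ a(G) + 1`. -/
theorem stmt12 (c₀ : ℕ) (hc₀ : 1 ≤ c₀) (t : ℕ) (ht4 : 4 ≤ t) (ht : 3 * (c₀ + 1) < t)
    (k : Fin t → ℕ) (hk : ∀ i, 1 ≤ k i) :
    gamma2 (GG t k) - annihilation (GG t k) = (t + 2) / 3 ∧
    c₀ + 1 < gamma2 (GG t k) - annihilation (GG t k) :=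
  stmt12_general c₀ t ht k hk
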